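/- Let (X,𝒳) be a measurable space and P a Markov kernel on X satisfying (H1), (H2) with set C and constants u > 1, M > 0, and (H3) with constants r ∈ (0,1), L ≥ 1. Let n ≥ 1, c ∈ ℝ₊ⁿ, f ∈ BD(Xⁿ,c), and for 0 ≤ i ≤ n−2 define g_i(x_0,…,x_i) = E_{x_i}[f(x_0,…,x_i, X_1,…,X_{n-1-i})] and g_{i,π}(x_0,…,x_i) = E_π[f(x_0,…,x_i, X_1,…,X_{n-1-i})], with g_{n-1} = g_{n-1,π} = f. Then for every 0 ≤ i ≤ n−1 and every (x_0,…,x_{i-1}, x_i) ∈ Xⁱ × C: |g_i(x_0,…,x_i) − g_{i,π}(x_0,…,x_i)| ≤ 2 L Σ_{j=i+1}^{n-1} c_j r^{j-i}. -/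

import Mathlib

open MeasureTheory ProbabilityTheory ENNReal Set
open scoped Classical

noncomputable section

namespace QMD

variable {𝓧 : Type*} [MeasurableSpace 𝓧]

/-- `BD 𝓧 n c` : the set of measurable functions `f : 𝓧ⁿ → ℝ` with bounded differences `c`,
i.e. `|f x - f y| ≤ ∑ i, c i · 1{x i ≠ y i}`. -/
def BD (𝓧 : Type*) [MeasurableSpace 𝓧] (n : ℕ) (c : Fin n → ℝ) :
    Set ((Fin n → 𝓧) → ℝ) :=
  {f | Measurable f ∧
    ∀ x y : Fin n → 𝓧, |f x - f y| ≤ ∑ i, if x i = y i then 0 else c i}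

/-- Prepend a point to a path. -/
def cons0 (x : 𝓧) (ω : ℕ → 𝓧) : ℕ → 𝓧 := fun n => Nat.casesOn n x ω

/-- `IsMarkovFamily P μm` : for every initial probability distribution `ξ`,
`μm ξ` is the law `P_ξ` on the canonical space `ℕ → 𝓧` of the Markov chain with
kernel `P` and initial distribution `ξ`; this is characterized by the fact that
`μm ξ` is a probability measure and by the one-step disintegration
`P_ξ = ∫ (law of (x, X_0, X_1, …) with (X_k) ∼ P_{P(x,·)}) ξ(dx)`. -/
def IsMarkovFamily (P : Kernel 𝓧 𝓧) (μm : Measure 𝓧 → Measure (ℕ → 𝓧)) : Prop :=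
  (∀ ξ : Measure 𝓧, IsProbabilityMeasure ξ → IsProbabilityMeasure (μm ξ)) ∧
  ∀ ξ : Measure 𝓧, IsProbabilityMeasure ξ →
    μm ξ = ξ.bind fun x => (μm (P x)).map (cons0 x)

/-- Total variation distance between two measures. -/
noncomputable def dTV (ξ ξ' : Measure 𝓧) : ℝ :=
  ⨆ A : {A : Set 𝓧 // MeasurableSet A}, |(ξ A.1).toReal - (ξ' A.1).toReal|

/-- The natural filtration `𝓕_i = σ(X_0, …, X_i)` on the canonical space. -/
def Fil (𝓧 : Type*) [MeasurableSpace 𝓧] (i : ℕ) : MeasurableSpace (ℕ → 𝓧) :=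
  MeasurableSpace.comap (fun ω (k : Fin (i + 1)) => ω (k : ℕ)) inferInstance

/-- The σ-algebra `𝓕_τ` associated with a (stopping) time `τ`. -/
def stoppedSA (τ : (ℕ → 𝓧) → ℕ∞) : MeasurableSpace (ℕ → 𝓧) :=
  MeasurableSpace.generateFrom
    {A | ∀ m : ℕ, MeasurableSet[Fil 𝓧 m] (A ∩ {ω | τ ω ≤ (m : ℕ∞)})}

/-- `hitTime C i ω = τ_C^i(ω) = inf {m ≥ i : ω m ∈ C}` (`⊤` if `C` is never hit after `i`). -/
noncomputable def hitTime (C : Set 𝓧) (i : ℕ) (ω : ℕ → 𝓧) : ℕ∞ :=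
  ⨅ (m : ℕ) (_ : i ≤ m ∧ ω m ∈ C), (m : ℕ∞)

/-- The return time `σ_C = inf {m ≥ 1 : ω m ∈ C}`. -/
noncomputable def retTime (C : Set 𝓧) : (ℕ → 𝓧) → ℕ∞ := hitTime C 1

/-- The shift operator `θ` on the canonical space. -/
def shift (ω : ℕ → 𝓧) : ℕ → 𝓧 := fun k => ω (k + 1)

/-- `geomPow b m = b ^ m ∈ [0,∞]` for an extended natural exponent `m` (for a base `b > 1`). -/
noncomputable def geomPow (b : ℝ) (m : ℕ∞) : ℝ≥0∞ :=
  if m = ⊤ then ⊤ else ENNReal.ofReal (b ^ m.toNat)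

/-- Iterates of a kernel. -/
noncomputable def kpow (P : Kernel 𝓧 𝓧) : ℕ → Kernel 𝓧 𝓧
  | 0 => Kernel.id
  | m + 1 => P.comp (kpow P m)

/-- `P` is irreducible and aperiodic: there is a nonzero measure `ψ` such that any
`ψ`-positive set is reached with positive probability at all large enough times,
from every starting point. -/
def IrreducibleAperiodic (P : Kernel 𝓧 𝓧) : Prop :=
  ∃ ψ : Measure 𝓧, ψ ≠ 0 ∧ ∀ (x : 𝓧) (A : Set 𝓧), MeasurableSet A → ψ A ≠ 0 →
    ∃ N : ℕ, ∀ m ≥ N, kpow P m x A ≠ 0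

/-- `pad n i x* v` : the vector in `𝓧ⁿ` whose first `i` coordinates are `x*`,
followed by `v 0, v 1, …`. -/
def pad (n i : ℕ) (xstar : 𝓧) (v : ℕ → 𝓧) : Fin n → 𝓧 :=
  fun k => if (k : ℕ) < i then xstar else v ((k : ℕ) - i)

/-- `padAt n i x* ω` : the vector `(x*, …, x*, ω i, ω (i+1), …, ω (n-1))` (with `i`
copies of `x*`). -/
def padAt (n i : ℕ) (xstar : 𝓧) (ω : ℕ → 𝓧) : Fin n → 𝓧 :=
  fun k => if (k : ℕ) < i then xstar else ω (k : ℕ)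

/-- `g_i(x_0,…,x_i) = E_{x_i}[f(x_0,…,x_i, X_1,…,X_{n-1-i})]`. -/
noncomputable def gfun (μm : Measure 𝓧 → Measure (ℕ → 𝓧)) {n : ℕ}
    (f : (Fin n → 𝓧) → ℝ) (i : Fin n) (v : Fin n → 𝓧) : ℝ :=
  ∫ ω, f (fun k => if (k : ℕ) ≤ (i : ℕ) then v k else ω ((k : ℕ) - (i : ℕ)))
    ∂(μm (Measure.dirac (v i)))

/-- `g_{i,π}(x_0,…,x_i) = E_π[f(x_0,…,x_i, X_1,…,X_{n-1-i})]`. -/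
noncomputable def gfunPi (μm : Measure 𝓧 → Measure (ℕ → 𝓧)) (π : Measure 𝓧) {n : ℕ}
    (f : (Fin n → 𝓧) → ℝ) (i : Fin n) (v : Fin n → 𝓧) : ℝ :=
  ∫ ω, f (fun k => if (k : ℕ) ≤ (i : ℕ) then v k else ω ((k : ℕ) - (i : ℕ))) ∂(μm π)

/-- `G_i = E_x[ f(X_0,…,X_{n-1}) | 𝓕_{τ_C^i} ]`. -/
noncomputable def Gfun (μm : Measure 𝓧 → Measure (ℕ → 𝓧)) (C : Set 𝓧) {n : ℕ}
    (f : (Fin n → 𝓧) → ℝ) (x : 𝓧) (i : ℕ) : (ℕ → 𝓧) → ℝ :=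
  (μm (Measure.dirac x))[(fun ω => f (fun k => ω (k : ℕ))) | stoppedSA (hitTime C i)]

section Helpers
lemma measurable_cons0 (x : 𝓧) : Measurable (cons0 x) :=
  measurable_pi_lambda _ fun n => by
    cases n with
    | zero => exact measurable_const
    | succ k => exact measurable_pi_apply k

lemma measurable_shift : Measurable (shift : (ℕ → 𝓧) → ℕ → 𝓧) :=
  measurable_pi_lambda _ fun k => measurable_pi_apply _

lemma cons0_zero (x : 𝓧) (ω : ℕ → 𝓧) : cons0 x ω 0 = x := rfl
lemma cons0_succ (x : 𝓧) (ω : ℕ → 𝓧) (k : ℕ) : cons0 x ω (k + 1) = ω k := rfl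
lemma shift_comp_cons0 (x : 𝓧) : shift ∘ (cons0 x) = id := rfl

def intF {α : Type*} [MeasurableSpace α] (g : α → ℝ) (ν : Measure α) : ℝ :=
  (∫⁻ a, ENNReal.ofReal (g a) ∂ν).toReal - (∫⁻ a, ENNReal.ofReal (-g a) ∂ν).toReal

lemma measurable_intF {α : Type*} [MeasurableSpace α] {g : α → ℝ} (hg : Measurable g) :
    Measurable fun ν : Measure α => intF g ν :=
  ((Measure.measurable_lintegral hg.ennreal_ofReal).ennreal_toReal).sub
    ((Measure.measurable_lintegral hg.neg.ennreal_ofReal).ennreal_toReal)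

lemma intF_eq {α : Type*} [MeasurableSpace α] {g : α → ℝ} {ν : Measure α}
    (hint : Integrable g ν) : intF g ν = ∫ a, g a ∂ν :=
  (integral_eq_lintegral_pos_part_sub_lintegral_neg_part hint).symm

lemma integrable_of_bound {α : Type*} [MeasurableSpace α] {ν : Measure α} [IsFiniteMeasure ν]
    {g : α → ℝ} (hg : AEMeasurable g ν) (B : ℝ) (hB : ∀ a, |g a| ≤ B) : Integrable g ν :=
  (integrable_const B).mono' hg.aestronglyMeasurable (ae_of_all _ fun a => by simpa using hB a)

lemma intF_bound {α : Type*} [MeasurableSpace α] {ν : Measure α} [IsProbabilityMeasure ν]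
    {g : α → ℝ} (hg : Measurable g) (B : ℝ) (hB : ∀ a, |g a| ≤ B) : |intF g ν| ≤ B := by
  rw [intF_eq (integrable_of_bound hg.aemeasurable B hB)]
  have h : ‖∫ a, g a ∂ν‖ ≤ B * (ν Set.univ).toReal :=
    norm_integral_le_of_norm_le_const (ae_of_all _ fun a => by
      simpa [Real.norm_eq_abs] using hB a)
  simpa [Real.norm_eq_abs, measure_univ] using h

lemma dTV_bddAbove (ξ ξ' : Measure 𝓧) [IsProbabilityMeasure ξ] [IsProbabilityMeasure ξ'] :
    BddAbove (Set.range fun A : {A : Set 𝓧 // MeasurableSet A} =>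
      |(ξ A.1).toReal - (ξ' A.1).toReal|) := by
  refine ⟨2, ?_⟩
  rintro y ⟨A, rfl⟩
  have h1 : (ξ A.1).toReal ≤ 1 := by
    have := ENNReal.toReal_mono (by simp) (prob_le_one (μ := ξ) (s := A.1))
    simpa using this
  have h2 : (ξ' A.1).toReal ≤ 1 := by
    have := ENNReal.toReal_mono (by simp) (prob_le_one (μ := ξ') (s := A.1))
    simpa using this
  have h3 : (0:ℝ) ≤ (ξ A.1).toReal := ENNReal.toReal_nonneg
  have h4 : (0:ℝ) ≤ (ξ' A.1).toReal := ENNReal.toReal_nonneg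
  rw [abs_le]; constructor <;> linarith

lemma dTV_nonneg (ξ ξ' : Measure 𝓧) : 0 ≤ dTV ξ ξ' :=
  Real.iSup_nonneg fun _ => abs_nonneg _

lemma dTV_comm (ξ ξ' : Measure 𝓧) : dTV ξ ξ' = dTV ξ' ξ :=
  iSup_congr fun A => abs_sub_comm _ _

lemma le_dTV (ξ ξ' : Measure 𝓧) [IsProbabilityMeasure ξ] [IsProbabilityMeasure ξ']
    {s : Set 𝓧} (hs : MeasurableSet s) :
    (ξ s).toReal - (ξ' s).toReal ≤ dTV ξ ξ' :=
  (le_abs_self _).trans (le_ciSup (dTV_bddAbove ξ ξ') ⟨s, hs⟩)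

/-- On a set where `ξ' ≤ ξ`, the difference of integrals is controlled by the mass gap. -/
lemma part_bound {ξ ξ' : Measure 𝓧} [IsFiniteMeasure ξ] [IsFiniteMeasure ξ'] {g : 𝓧 → ℝ}
    (hgξ : AEMeasurable g ξ) (hgξ' : AEMeasurable g ξ') {d : ℝ} (hgb : ∀ y, |g y| ≤ d)
    {s : Set 𝓧} (hs : MeasurableSet s) (hle : ξ'.restrict s ≤ ξ.restrict s) :
    |(∫ y in s, g y ∂ξ) - ∫ y in s, g y ∂ξ'| ≤ d * ((ξ s).toReal - (ξ' s).toReal) := by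
  set ν := ξ.restrict s - ξ'.restrict s with hν
  haveI : IsFiniteMeasure ν :=
    isFiniteMeasure_of_le ξ (Measure.sub_le.trans Measure.restrict_le_self)
  have hadd : ν + ξ'.restrict s = ξ.restrict s := Measure.sub_add_cancel_of_le hle
  have hsplit : ∫ y in s, g y ∂ξ = (∫ y, g y ∂ν) + ∫ y in s, g y ∂ξ' := by
    conv_lhs => rw [← hadd]
    exact integral_add_measure
      (integrable_of_bound (hgξ.mono_measure (Measure.sub_le.trans Measure.restrict_le_self)) d hgb)
      (integrable_of_bound (hgξ'.mono_measure Measure.restrict_le_self) d hgb)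
  have hb : |∫ y, g y ∂ν| ≤ d * (ν Set.univ).toReal := by
    have h := norm_integral_le_of_norm_le_const (μ := ν) (f := g) (C := d)
      (ae_of_all _ fun a => by simpa [Real.norm_eq_abs] using hgb a)
    simpa [Real.norm_eq_abs, measureReal_def] using h
  have huniv : (ν Set.univ).toReal = (ξ s).toReal - (ξ' s).toReal := by
    have h1 : ξ'.restrict s Set.univ ≤ ξ.restrict s Set.univ := hle Set.univ
    rw [hν, Measure.sub_apply MeasurableSet.univ hle,
      ENNReal.toReal_sub_of_le h1 (measure_ne_top _ _)]
    simp [Measure.restrict_apply_univ]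
  rw [show (∫ y in s, g y ∂ξ) - ∫ y in s, g y ∂ξ' = ∫ y, g y ∂ν from by rw [hsplit]; ring]
  rw [← huniv]; exact hb

lemma abs_integral_sub_le_dTV {ξ ξ' : Measure 𝓧} [IsProbabilityMeasure ξ]
    [IsProbabilityMeasure ξ'] {g : 𝓧 → ℝ} (hgξ : AEMeasurable g ξ) (hgξ' : AEMeasurable g ξ')
    {d : ℝ} (hgb : ∀ y, |g y| ≤ d) :
    |(∫ y, g y ∂ξ) - ∫ y, g y ∂ξ'| ≤ 2 * d * dTV ξ ξ' := by
  obtain ⟨s, hs, h1, h2⟩ := hahn_decomposition (μ := ξ) (ν := ξ')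
  have hle1 : ξ'.restrict s ≤ ξ.restrict s := by
    refine Measure.le_iff.2 fun t ht => ?_
    rw [Measure.restrict_apply ht, Measure.restrict_apply ht]
    exact h1 _ (ht.inter hs) inter_subset_right
  have hle2 : ξ.restrict sᶜ ≤ ξ'.restrict sᶜ := by
    refine Measure.le_iff.2 fun t ht => ?_
    rw [Measure.restrict_apply ht, Measure.restrict_apply ht]
    exact h2 _ (ht.inter hs.compl) inter_subset_right
  have hint : Integrable g ξ := integrable_of_bound hgξ d hgb
  have hint' : Integrable g ξ' := integrable_of_bound hgξ' d hgb
  have e1 : ∫ y, g y ∂ξ = (∫ y in s, g y ∂ξ) + ∫ y in sᶜ, g y ∂ξ :=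
    (integral_add_compl hs hint).symm
  have e2 : ∫ y, g y ∂ξ' = (∫ y in s, g y ∂ξ') + ∫ y in sᶜ, g y ∂ξ' :=
    (integral_add_compl hs hint').symm
  have p1 := part_bound hgξ hgξ' hgb hs hle1
  have p2 := part_bound hgξ' hgξ hgb hs.compl hle2
  have q1 : (ξ s).toReal - (ξ' s).toReal ≤ dTV ξ ξ' := le_dTV ξ ξ' hs
  have q2 : (ξ' sᶜ).toReal - (ξ sᶜ).toReal ≤ dTV ξ ξ' := by
    rw [dTV_comm]; exact le_dTV ξ' ξ hs.compl
  have habs : |(∫ y, g y ∂ξ) - ∫ y, g y ∂ξ'| ≤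
      |(∫ y in s, g y ∂ξ) - ∫ y in s, g y ∂ξ'| +
      |(∫ y in sᶜ, g y ∂ξ) - ∫ y in sᶜ, g y ∂ξ'| := by
    rw [e1, e2]
    have : (∫ y in s, g y ∂ξ) + (∫ y in sᶜ, g y ∂ξ) -
        ((∫ y in s, g y ∂ξ') + ∫ y in sᶜ, g y ∂ξ') =
        ((∫ y in s, g y ∂ξ) - ∫ y in s, g y ∂ξ') +
        ((∫ y in sᶜ, g y ∂ξ) - ∫ y in sᶜ, g y ∂ξ') := by ring
    rw [this]; exact abs_add_le _ _
  have hd0 : 0 ≤ d := le_trans (abs_nonneg _) (hgb (Classical.choice (by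
    by_contra h
    have : ξ Set.univ = 1 := measure_univ
    rw [Set.univ_eq_empty_iff.2 ⟨fun x => absurd ⟨x⟩ h⟩] at this
    simp at this)))
  have p2' : |(∫ y in sᶜ, g y ∂ξ) - ∫ y in sᶜ, g y ∂ξ'| ≤
      d * ((ξ' sᶜ).toReal - (ξ sᶜ).toReal) := by
    rw [abs_sub_comm]; exact p2
  have := mul_le_mul_of_nonneg_left q1 hd0
  have := mul_le_mul_of_nonneg_left q2 hd0
  nlinarith [habs, p1, p2']

section Markov
variable {P : Kernel 𝓧 𝓧} [IsMarkovKernel P] {μm : Measure 𝓧 → Measure (ℕ → 𝓧)}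

/-- The kernel `x ↦ law of (x, X₁, X₂, …)` with `(Xₖ) ∼ P_{P(x,·)}`. -/
def Fam (P : Kernel 𝓧 𝓧) (μm : Measure 𝓧 → Measure (ℕ → 𝓧)) : 𝓧 → Measure (ℕ → 𝓧) :=
  fun x => (μm (P x)).map (cons0 x)

lemma bind_congr_ae {α : Type*} [MeasurableSpace α] {ξ : Measure 𝓧} {F G : 𝓧 → Measure α}
    (h : F =ᵐ[ξ] G) : ξ.bind F = ξ.bind G := by
  rw [Measure.bind, Measure.bind, Measure.map_congr h]

lemma bind_ae_apply {α : Type*} [MeasurableSpace α] {ξ : Measure 𝓧} {F : 𝓧 → Measure α}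
    (hF : AEMeasurable F ξ) {s : Set α} (hs : MeasurableSet s) :
    ξ.bind F s = ∫⁻ x, F x s ∂ξ := by
  rw [bind_congr_ae hF.ae_eq_mk, Measure.bind_apply hs hF.measurable_mk.aemeasurable]
  apply lintegral_congr_ae
  filter_upwards [hF.ae_eq_mk] with x hx
  rw [hx]

lemma probBindKernel (ξ : Measure 𝓧) [IsProbabilityMeasure ξ] (κ : Kernel 𝓧 𝓧)
    [IsMarkovKernel κ] : IsProbabilityMeasure (ξ.bind ⇑κ) := by
  constructor
  rw [Measure.bind_apply MeasurableSet.univ κ.measurable.aemeasurable]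
  simp [measure_univ]

lemma probFam (hμm : IsMarkovFamily P μm) (x : 𝓧) : IsProbabilityMeasure (Fam P μm x) := by
  haveI := hμm.1 (P x) inferInstance
  exact Measure.isProbabilityMeasure_map (measurable_cons0 x).aemeasurable

lemma Fam_shift (hμm : IsMarkovFamily P μm) (x : 𝓧) :
    (Fam P μm x).map shift = μm (P x) := by
  rw [Fam, Measure.map_map measurable_shift (measurable_cons0 x), shift_comp_cons0,
    Measure.map_id]

lemma bind_Fam (hμm : IsMarkovFamily P μm) (ξ : Measure 𝓧) [IsProbabilityMeasure ξ] :
    μm ξ = ξ.bind (Fam P μm) := hμm.2 ξ inferInstance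

lemma aemeasFam (hμm : IsMarkovFamily P μm) (ξ : Measure 𝓧) [IsProbabilityMeasure ξ] :
    AEMeasurable (Fam P μm) ξ := by
  by_contra h
  have h2 : μm ξ = ξ.bind (Fam P μm) := bind_Fam hμm ξ
  rw [Measure.bind, Measure.map_of_not_aemeasurable h, Measure.join_zero] at h2
  haveI := hμm.1 ξ inferInstance
  exact IsProbabilityMeasure.ne_zero (μm ξ) h2

lemma aemeas_mumP (hμm : IsMarkovFamily P μm) (ξ : Measure 𝓧) [IsProbabilityMeasure ξ] :
    AEMeasurable (fun x => μm (P x)) ξ := by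
  have he : (fun x => μm (P x)) = (fun ν : Measure (ℕ → 𝓧) => ν.map shift) ∘ (Fam P μm) := by
    funext x; simp only [Function.comp_apply, Fam_shift hμm x]
  rw [he]
  exact (Measure.measurable_map _ measurable_shift).comp_aemeasurable (aemeasFam hμm ξ)

lemma bind_P (hμm : IsMarkovFamily P μm) (ξ : Measure 𝓧) [IsProbabilityMeasure ξ] :
    μm (ξ.bind ⇑P) = ξ.bind (fun x => μm (P x)) := by
  haveI hbp : IsProbabilityMeasure (ξ.bind ⇑P) := probBindKernel ξ P
  have hF2 : AEMeasurable (Fam P μm) (ξ.bind ⇑P) := aemeasFam hμm _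
  set F' := hF2.mk (Fam P μm) with hF'def
  have hae : ∀ᵐ x ∂ξ, (Fam P μm) =ᵐ[P x] F' := by
    have h0 : (ξ.bind ⇑P) {z | ¬ Fam P μm z = F' z} = 0 := ae_iff.1 hF2.ae_eq_mk
    obtain ⟨N, hsub, hNmeas, hN0⟩ := exists_measurable_superset_of_null h0
    have hint : ∫⁻ x, P x N ∂ξ = 0 := by
      rw [← Measure.bind_apply hNmeas P.measurable.aemeasurable]; exact hN0
    have hz := (lintegral_eq_zero_iff (P.measurable_coe hNmeas)).1 hint
    filter_upwards [hz] with x hx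
    refine ae_iff.2 (measure_mono_null hsub (by simpa using hx))
  ext s hs
  have hmi : Measurable fun z => F' z s := (Measure.measurable_coe hs).comp hF2.measurable_mk
  have e1 : μm (ξ.bind ⇑P) s = ∫⁻ x, ∫⁻ z, F' z s ∂(P x) ∂ξ := by
    rw [bind_Fam hμm (ξ.bind ⇑P), bind_congr_ae hF2.ae_eq_mk,
      Measure.bind_apply hs hF2.measurable_mk.aemeasurable,
      Measure.lintegral_bind P.measurable.aemeasurable hmi.aemeasurable]
  have e2 : ∀ᵐ x ∂ξ, ∫⁻ z, F' z s ∂(P x) = μm (P x) s := by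
    filter_upwards [hae] with x hx
    have : ∫⁻ z, F' z s ∂(P x) = ∫⁻ z, Fam P μm z s ∂(P x) := by
      apply lintegral_congr_ae
      filter_upwards [hx] with z hz
      rw [hz]
    rw [this, ← bind_ae_apply (aemeasFam hμm (P x)) hs, ← bind_Fam hμm (P x)]
  rw [e1, lintegral_congr_ae e2, ← bind_ae_apply (aemeas_mumP hμm ξ) hs]

lemma bind_kpow_zero (ξ : Measure 𝓧) : ξ.bind ⇑(kpow P 0) = ξ := by
  show ξ.bind ⇑(Kernel.id : Kernel 𝓧 𝓧) = ξ
  have h : ⇑(Kernel.id : Kernel 𝓧 𝓧) = fun a => Measure.dirac a :=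
    funext fun a => Kernel.id_apply a
  rw [h]
  exact Measure.bind_dirac

lemma bind_kpow_comm (ζ : Measure 𝓧) (j : ℕ) :
    ζ.bind ⇑(kpow P (j+1)) = (ζ.bind ⇑(kpow P j)).bind ⇑P := by
  have h : ⇑(kpow P (j+1)) = fun a => ((kpow P j) a).bind ⇑P :=
    funext fun a => Kernel.comp_apply P (kpow P j) a
  rw [h, ← Measure.bind_bind (kpow P j).measurable.aemeasurable P.measurable.aemeasurable]

lemma bind_kpow_succ (ξ : Measure 𝓧) (m : ℕ) :
    ξ.bind ⇑(kpow P (m+1)) = (ξ.bind ⇑P).bind ⇑(kpow P m) := by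
  induction m generalizing ξ with
  | zero => rw [bind_kpow_comm, bind_kpow_zero, bind_kpow_zero]
  | succ k ih => rw [bind_kpow_comm, ih, ← bind_kpow_comm]

lemma pi_kpow {π : Measure 𝓧} (hInv : Kernel.Invariant P π) (m : ℕ) :
    π.bind ⇑(kpow P m) = π := by
  induction m with
  | zero => exact bind_kpow_zero π
  | succ k ih => rw [bind_kpow_succ, hInv.def, ih]

lemma integral_bind_ae {α : Type*} [MeasurableSpace α] {ξ : Measure 𝓧} [IsProbabilityMeasure ξ]
    {F : 𝓧 → Measure α} (hF : AEMeasurable F ξ) (hFp : ∀ x, IsProbabilityMeasure (F x))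
    {g : α → ℝ} (hg : Measurable g) (B : ℝ) (hB : ∀ a, |g a| ≤ B) :
    ∫ a, g a ∂(ξ.bind F) = ∫ x, intF g (F x) ∂ξ := by
  set F' := hF.mk F with hF'def
  have hbe : ξ.bind F = ξ.bind F' := bind_congr_ae hF.ae_eq_mk
  haveI : IsProbabilityMeasure (ξ.bind F) := by
    constructor
    rw [bind_ae_apply hF MeasurableSet.univ]
    simp [measure_univ]
  have hint : Integrable g (ξ.bind F) := integrable_of_bound hg.aemeasurable B hB
  set a : 𝓧 → ℝ≥0∞ := fun x => ∫⁻ t, ENNReal.ofReal (g t) ∂(F' x) with hadef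
  set b : 𝓧 → ℝ≥0∞ := fun x => ∫⁻ t, ENNReal.ofReal (-g t) ∂(F' x) with hbdef
  have ham : Measurable a := (Measure.measurable_lintegral hg.ennreal_ofReal).comp hF.measurable_mk
  have hbm : Measurable b :=
    (Measure.measurable_lintegral hg.neg.ennreal_ofReal).comp hF.measurable_mk
  have ha_le : ∀ᵐ x ∂ξ, a x ≤ ENNReal.ofReal B := by
    filter_upwards [hF.ae_eq_mk] with x hx
    have hx' : F' x = F x := by rw [hF'def]; exact hx.symm
    have : a x = ∫⁻ t, ENNReal.ofReal (g t) ∂(F x) := by rw [hadef]; simp only []; rw [hx']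
    rw [this]
    calc ∫⁻ t, ENNReal.ofReal (g t) ∂(F x) ≤ ∫⁻ _, ENNReal.ofReal B ∂(F x) :=
          lintegral_mono fun t => ENNReal.ofReal_le_ofReal (abs_le.1 (hB t)).2
      _ = ENNReal.ofReal B := by haveI := hFp x; simp [measure_univ]
  have hb_le : ∀ᵐ x ∂ξ, b x ≤ ENNReal.ofReal B := by
    filter_upwards [hF.ae_eq_mk] with x hx
    have hx' : F' x = F x := by rw [hF'def]; exact hx.symm
    have : b x = ∫⁻ t, ENNReal.ofReal (-g t) ∂(F x) := by rw [hbdef]; simp only []; rw [hx']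
    rw [this]
    calc ∫⁻ t, ENNReal.ofReal (-g t) ∂(F x) ≤ ∫⁻ _, ENNReal.ofReal B ∂(F x) :=
          lintegral_mono fun t => ENNReal.ofReal_le_ofReal (by linarith [(abs_le.1 (hB t)).1])
      _ = ENNReal.ofReal B := by haveI := hFp x; simp [measure_univ]
  have ha_int : ∫⁻ x, a x ∂ξ ≠ ⊤ := by
    refine ne_top_of_le_ne_top ?_ (lintegral_mono_ae ha_le)
    simp [lintegral_const, measure_univ]
  have hb_int : ∫⁻ x, b x ∂ξ ≠ ⊤ := by
    refine ne_top_of_le_ne_top ?_ (lintegral_mono_ae hb_le)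
    simp [lintegral_const, measure_univ]
  have ha_lt : ∀ᵐ x ∂ξ, a x < ⊤ := by
    filter_upwards [ha_le] with x hx; exact lt_of_le_of_lt hx ENNReal.ofReal_lt_top
  have hb_lt : ∀ᵐ x ∂ξ, b x < ⊤ := by
    filter_upwards [hb_le] with x hx; exact lt_of_le_of_lt hx ENNReal.ofReal_lt_top
  have hIa : Integrable (fun x => (a x).toReal) ξ :=
    integrable_toReal_of_lintegral_ne_top ham.aemeasurable ha_int
  have hIb : Integrable (fun x => (b x).toReal) ξ :=
    integrable_toReal_of_lintegral_ne_top hbm.aemeasurable hb_int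
  have key : ∫ x, ((a x).toReal - (b x).toReal) ∂ξ =
      (∫⁻ x, a x ∂ξ).toReal - (∫⁻ x, b x ∂ξ).toReal := by
    rw [integral_sub hIa hIb, integral_toReal ham.aemeasurable ha_lt,
      integral_toReal hbm.aemeasurable hb_lt]
  have hR : ∫ x, intF g (F x) ∂ξ = ∫ x, ((a x).toReal - (b x).toReal) ∂ξ := by
    apply integral_congr_ae
    filter_upwards [hF.ae_eq_mk] with x hx
    have hx' : F' x = F x := by rw [hF'def]; exact hx.symm
    rw [intF, ← hx', hadef, hbdef]
  rw [hR, key, integral_eq_lintegral_pos_part_sub_lintegral_neg_part hint, hbe,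
    Measure.lintegral_bind hF.measurable_mk.aemeasurable hg.ennreal_ofReal.aemeasurable,
    Measure.lintegral_bind (f := fun a => ENNReal.ofReal (-g a)) hF.measurable_mk.aemeasurable hg.neg.ennreal_ofReal.aemeasurable]

lemma map_bind_ae {α β : Type*} [MeasurableSpace α] [MeasurableSpace β] {ξ : Measure 𝓧}
    {F : 𝓧 → Measure α} (hF : AEMeasurable F ξ) {φ : α → β} (hφ : Measurable φ) :
    (ξ.bind F).map φ = ξ.bind (fun x => (F x).map φ) := by
  set F' := hF.mk F with hF'def
  have h1 : (ξ.bind F) = ξ.bind F' := bind_congr_ae hF.ae_eq_mk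
  have h2 : ξ.bind (fun x => (F x).map φ) = ξ.bind (fun x => (F' x).map φ) := by
    apply bind_congr_ae
    filter_upwards [hF.ae_eq_mk] with x hx
    have hx' : F' x = F x := by rw [hF'def]; exact hx.symm
    show (F x).map φ = (F' x).map φ
    rw [hx']
  rw [h1, h2]
  ext s hs
  have hm2 : Measurable fun x => (F' x).map φ :=
    (Measure.measurable_map _ hφ).comp hF.measurable_mk
  rw [Measure.map_apply hφ hs, Measure.bind_apply (hφ hs) hF.measurable_mk.aemeasurable,
    Measure.bind_apply hs hm2.aemeasurable]
  apply lintegral_congr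
  intro x
  rw [Measure.map_apply hφ hs]

lemma shift_law (hμm : IsMarkovFamily P μm) (ξ : Measure 𝓧) [IsProbabilityMeasure ξ] :
    (μm ξ).map shift = μm (ξ.bind ⇑P) := by
  rw [bind_Fam hμm ξ, map_bind_ae (aemeasFam hμm ξ) measurable_shift]
  have h : (fun x => (Fam P μm x).map shift) = fun x => μm (P x) :=
    funext fun x => Fam_shift hμm x
  rw [h, ← bind_P hμm ξ]

lemma eval_zero_law (hμm : IsMarkovFamily P μm) (ξ : Measure 𝓧) [IsProbabilityMeasure ξ] :
    (μm ξ).map (fun ω => ω 0) = ξ := by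
  rw [bind_Fam hμm ξ, map_bind_ae (aemeasFam hμm ξ) (measurable_pi_apply 0)]
  have h : (fun x => (Fam P μm x).map (fun ω => ω 0)) = fun x => Measure.dirac x := by
    funext x
    haveI := hμm.1 (P x) inferInstance
    rw [Fam, Measure.map_map (measurable_pi_apply 0) (measurable_cons0 x)]
    have : ((fun ω : ℕ → 𝓧 => ω 0) ∘ cons0 x) = fun _ => x := rfl
    rw [this, Measure.map_const, measure_univ, one_smul]
  rw [h, Measure.bind_dirac]

lemma eval_law (hμm : IsMarkovFamily P μm) (m : ℕ) :
    ∀ (ξ : Measure 𝓧), IsProbabilityMeasure ξ →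
      (μm ξ).map (fun ω => ω m) = ξ.bind ⇑(kpow P m) := by
  induction m with
  | zero =>
    intro ξ hξ
    haveI := hξ
    rw [bind_kpow_zero]
    exact eval_zero_law hμm ξ
  | succ k ih =>
    intro ξ hξ
    haveI := hξ
    haveI : IsProbabilityMeasure (ξ.bind ⇑P) := probBindKernel ξ P
    have h1 : (fun ω : ℕ → 𝓧 => ω (k+1)) = (fun ω : ℕ → 𝓧 => ω k) ∘ shift := rfl
    rw [h1, ← Measure.map_map (measurable_pi_apply k) measurable_shift,
      shift_law hμm ξ, ih (ξ.bind ⇑P) inferInstance, ← bind_kpow_succ]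

lemma keyB (hμm : IsMarkovFamily P μm) (y₀ : 𝓧) :
    ∀ (N : ℕ) (d : ℕ → ℝ), (∀ m, 0 ≤ d m) → ∀ (Φ : (ℕ → 𝓧) → ℝ), Measurable Φ →
    ∀ (B : ℝ), (∀ ω, |Φ ω| ≤ B) →
    (∀ ω ω', |Φ ω - Φ ω'| ≤ ∑ m ∈ Finset.range N, if ω m = ω' m then 0 else d m) →
    ∀ (ξ ξ' : Measure 𝓧), IsProbabilityMeasure ξ → IsProbabilityMeasure ξ' →
    |(∫ ω, Φ ω ∂(μm ξ)) - ∫ ω, Φ ω ∂(μm ξ')| ≤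
      ∑ m ∈ Finset.range N, d m * (2 * dTV (ξ.bind ⇑(kpow P m)) (ξ'.bind ⇑(kpow P m))) := by
  intro N
  induction N with
  | zero =>
    intro d hd Φ hΦ B hB hΦd ξ ξ' hξ hξ'
    haveI := hξ; haveI := hξ'
    haveI := hμm.1 ξ hξ; haveI := hμm.1 ξ' hξ'
    have hconst : ∀ ω, Φ ω = Φ (fun _ => y₀) := by
      intro ω
      have h := hΦd ω (fun _ => y₀)
      simp only [Finset.range_zero, Finset.sum_empty] at h
      exact sub_eq_zero.1 (abs_nonpos_iff.1 h)
    have e : ∀ (ν : Measure (ℕ → 𝓧)), IsProbabilityMeasure ν →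
        ∫ ω, Φ ω ∂ν = Φ (fun _ => y₀) := by
      intro ν hν; haveI := hν
      rw [integral_congr_ae (ae_of_all _ hconst), integral_const]
      simp [measure_univ]
    rw [e _ inferInstance, e _ inferInstance]
    simp
  | succ N ih =>
    intro d hd Φ hΦ B hB hΦd ξ ξ' hξ hξ'
    haveI := hξ; haveI := hξ'
    set Φt : (ℕ → 𝓧) → ℝ := fun σ => Φ (cons0 y₀ σ) with hΦtdef
    have hΦt_m : Measurable Φt := hΦ.comp (measurable_cons0 y₀)
    have hΦt_b : ∀ σ, |Φt σ| ≤ B := fun σ => hB _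
    have hΦt_d : ∀ σ σ', |Φt σ - Φt σ'| ≤
        ∑ m ∈ Finset.range N, if σ m = σ' m then 0 else d (m+1) := by
      intro σ σ'
      have h := hΦd (cons0 y₀ σ) (cons0 y₀ σ')
      rw [Finset.sum_range_succ'] at h
      simp [cons0_succ, cons0_zero, hΦtdef] at h ⊢
      refine h.trans (le_of_eq (Finset.sum_congr rfl fun m _ => ?_))
      congr 1
    set g : 𝓧 → ℝ := fun x => intF Φ (Fam P μm x) - intF Φt (μm (P x)) with hgdef
    have hg_eq : g = (fun ν : Measure (ℕ → 𝓧) =>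
        intF Φ ν - intF Φt (ν.map shift)) ∘ (Fam P μm) := by
      funext x
      simp only [hgdef, Function.comp_apply, Fam_shift hμm x]
    have hg_aem : ∀ (ζ : Measure 𝓧), IsProbabilityMeasure ζ → AEMeasurable g ζ := by
      intro ζ hζ; haveI := hζ
      rw [hg_eq]
      exact ((measurable_intF hΦ).sub ((measurable_intF hΦt_m).comp
        (Measure.measurable_map _ measurable_shift))).comp_aemeasurable (aemeasFam hμm ζ)
    have hg_bd : ∀ x, |g x| ≤ d 0 := by
      intro x
      haveI := probFam hμm x
      haveI := hμm.1 (P x) inferInstance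
      have hi1 : Integrable (fun ω => Φ (cons0 x ω)) (μm (P x)) :=
        integrable_of_bound (hΦ.comp (measurable_cons0 x)).aemeasurable B (fun ω => hB _)
      have hi2 : Integrable (fun ω => Φ (cons0 y₀ ω)) (μm (P x)) :=
        integrable_of_bound (hΦ.comp (measurable_cons0 y₀)).aemeasurable B (fun ω => hB _)
      have e1 : intF Φ (Fam P μm x) = ∫ ω, Φ (cons0 x ω) ∂(μm (P x)) := by
        rw [intF_eq (integrable_of_bound hΦ.aemeasurable B hB), Fam,
          integral_map (measurable_cons0 x).aemeasurable hΦ.aestronglyMeasurable]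
      have e2 : intF Φt (μm (P x)) = ∫ ω, Φ (cons0 y₀ ω) ∂(μm (P x)) :=
        intF_eq (integrable_of_bound hΦt_m.aemeasurable B hΦt_b)
      rw [hgdef]
      simp only []
      rw [e1, e2, ← integral_sub hi1 hi2]
      have hpt : ∀ ω, |Φ (cons0 x ω) - Φ (cons0 y₀ ω)| ≤ d 0 := by
        intro ω
        refine (hΦd _ _).trans ?_
        rw [Finset.sum_range_succ']
        have hz : ∀ m ∈ Finset.range N,
            (if cons0 x ω (m+1) = cons0 y₀ ω (m+1) then (0:ℝ) else d (m+1)) = 0 := by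
          intro m _; simp [cons0_succ]
        rw [Finset.sum_congr rfl hz]
        simp only [Finset.sum_const, smul_zero, zero_add, cons0_zero]
        split_ifs with hxy <;> simp [hxy, hd 0]
      have h := norm_integral_le_of_norm_le_const (μ := μm (P x)) (C := d 0)
        (f := fun ω => Φ (cons0 x ω) - Φ (cons0 y₀ ω))
        (ae_of_all _ fun ω => by simpa [Real.norm_eq_abs] using hpt ω)
      simpa [Real.norm_eq_abs, measure_univ] using h
    have hid : ∀ (ζ : Measure 𝓧), IsProbabilityMeasure ζ →
        ∫ ω, Φ ω ∂(μm ζ) = (∫ x, g x ∂ζ) + ∫ ω, Φt ω ∂(μm (ζ.bind ⇑P)) := by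
      intro ζ hζ; haveI := hζ
      have h1 : ∫ ω, Φ ω ∂(μm ζ) = ∫ x, intF Φ (Fam P μm x) ∂ζ := by
        rw [bind_Fam hμm ζ]
        exact integral_bind_ae (aemeasFam hμm ζ) (probFam hμm) hΦ B hB
      have h2 : ∫ ω, Φt ω ∂(μm (ζ.bind ⇑P)) = ∫ x, intF Φt (μm (P x)) ∂ζ := by
        rw [bind_P hμm ζ]
        exact integral_bind_ae (aemeas_mumP hμm ζ)
          (fun x => hμm.1 (P x) inferInstance) hΦt_m B hΦt_b
      have hIg : Integrable g ζ := integrable_of_bound (hg_aem ζ hζ) (d 0) hg_bd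
      have hI2 : Integrable (fun x => intF Φt (μm (P x))) ζ := by
        refine integrable_of_bound ?_ B ?_
        · exact (measurable_intF hΦt_m).comp_aemeasurable (aemeas_mumP hμm ζ)
        · intro x
          haveI := hμm.1 (P x) inferInstance
          exact intF_bound hΦt_m B hΦt_b
      rw [h1, h2, ← integral_add hIg hI2]
      apply integral_congr_ae (ae_of_all _ fun x => ?_)
      simp [hgdef]
    rw [hid ξ hξ, hid ξ' hξ']
    have h3 : |(∫ x, g x ∂ξ) - ∫ x, g x ∂ξ'| ≤ 2 * d 0 * dTV ξ ξ' :=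
      abs_integral_sub_le_dTV (hg_aem ξ hξ) (hg_aem ξ' hξ') hg_bd
    haveI hpb : IsProbabilityMeasure (ξ.bind ⇑P) := probBindKernel ξ P
    haveI hpb' : IsProbabilityMeasure (ξ'.bind ⇑P) := probBindKernel ξ' P
    have h4 := ih (fun m => d (m+1)) (fun m => hd _) Φt hΦt_m B hΦt_b hΦt_d
      (ξ.bind ⇑P) (ξ'.bind ⇑P) hpb hpb'
    rw [Finset.sum_range_succ']
    have hsumeq : ∀ m ∈ Finset.range N,
        d (m+1) * (2 * dTV ((ξ.bind ⇑P).bind ⇑(kpow P m)) ((ξ'.bind ⇑P).bind ⇑(kpow P m))) =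
        d (m+1) * (2 * dTV (ξ.bind ⇑(kpow P (m+1))) (ξ'.bind ⇑(kpow P (m+1)))) := by
      intro m _
      rw [← bind_kpow_succ, ← bind_kpow_succ]
    rw [← Finset.sum_congr rfl hsumeq]
    have h5 : d 0 * (2 * dTV (ξ.bind ⇑(kpow P 0)) (ξ'.bind ⇑(kpow P 0))) =
        2 * d 0 * dTV ξ ξ' := by
      rw [bind_kpow_zero, bind_kpow_zero]; ring
    rw [h5]
    have habs : |((∫ x, g x ∂ξ) + ∫ ω, Φt ω ∂(μm (ξ.bind ⇑P))) -
        ((∫ x, g x ∂ξ') + ∫ ω, Φt ω ∂(μm (ξ'.bind ⇑P)))| ≤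
        |(∫ x, g x ∂ξ) - ∫ x, g x ∂ξ'| +
        |(∫ ω, Φt ω ∂(μm (ξ.bind ⇑P))) - ∫ ω, Φt ω ∂(μm (ξ'.bind ⇑P))| := by
      have e : ((∫ x, g x ∂ξ) + ∫ ω, Φt ω ∂(μm (ξ.bind ⇑P))) -
          ((∫ x, g x ∂ξ') + ∫ ω, Φt ω ∂(μm (ξ'.bind ⇑P))) =
          ((∫ x, g x ∂ξ) - ∫ x, g x ∂ξ') +
          ((∫ ω, Φt ω ∂(μm (ξ.bind ⇑P))) - ∫ ω, Φt ω ∂(μm (ξ'.bind ⇑P))) := by ring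
      rw [e]; exact abs_add_le _ _
    linarith [habs, h3, h4]

lemma sum_reindex (n i : ℕ) (hi : i < n) (E : ℕ → ℝ) :
    ∑ m ∈ Finset.range (n - i), (if m = 0 then (0:ℝ) else E (i + m)) =
    ∑ j : Fin n, if i < (j : ℕ) then E (j : ℕ) else 0 := by
  have h1 : ∑ m ∈ Finset.range (n - i), (if m = 0 then (0:ℝ) else E (i + m)) =
      ∑ m ∈ Finset.range (n - i), (if 0 < m then E (i + m) else 0) := by
    refine Finset.sum_congr rfl fun m _ => ?_
    rcases Nat.eq_zero_or_pos m with h | h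
    · simp [h]
    · rw [if_pos h, if_neg (by omega)]
  have h2 : ∑ j : Fin n, (if i < (j:ℕ) then E (j:ℕ) else 0) =
      ∑ j ∈ Finset.range n, (if i < j then E j else 0) :=
    Fin.sum_univ_eq_sum_range (fun j => if i < j then E j else 0) n
  rw [h1, h2, ← Finset.sum_filter, ← Finset.sum_filter]
  have h3 : Finset.filter (fun m => 0 < m) (Finset.range (n - i)) = Finset.Ico 1 (n - i) := by
    ext m; simp [Finset.mem_Ico, Finset.mem_filter, Finset.mem_range]; omega
  have h4 : Finset.filter (fun j => i < j) (Finset.range n) = Finset.Ico (i+1) n := by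
    ext j; simp [Finset.mem_Ico, Finset.mem_filter, Finset.mem_range]; omega
  rw [h3, h4, Finset.sum_Ico_eq_sum_range, Finset.sum_Ico_eq_sum_range]
  have h5 : n - (i+1) = n - i - 1 := by omega
  rw [h5]
  refine Finset.sum_congr rfl fun t _ => ?_
  congr 1
  omega
end Markov
end Helpers

/-- **Lemma 2** : for `x_i ∈ C`,
`|g_i(x_0,…,x_i) − g_{i,π}(x_0,…,x_i)| ≤ 2L ∑_{j=i+1}^{n-1} c_j r^(j-i)`. -/
theorem gfun_sub_gfunPi_le
    {𝓧 : Type*} [MeasurableSpace 𝓧] (P : Kernel 𝓧 𝓧) [IsMarkovKernel P]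
    (μm : Measure 𝓧 → Measure (ℕ → 𝓧)) (hμm : IsMarkovFamily P μm)
    -- (H1) `P` is irreducible and aperiodic, with unique invariant probability `π`
    (π : Measure 𝓧) [IsProbabilityMeasure π]
    (hIA : IrreducibleAperiodic P) (hInv : Kernel.Invariant P π)
    (hUniq : ∀ π' : Measure 𝓧, IsProbabilityMeasure π' → Kernel.Invariant P π' → π' = π)
    -- (H2) geometric return times to `C`
    (C : Set 𝓧) (hCne : C.Nonempty) (hCmeas : MeasurableSet C)
    (u M : ℝ) (hu : 1 < u) (hM : 0 < M)
    (hH2 : ∀ y ∈ C, ∫⁻ ω, geomPow u (retTime C ω) ∂(μm (Measure.dirac y)) ≤ ENNReal.ofReal M)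
    -- (H3) geometric ergodicity from `C`
    (r L : ℝ) (hr0 : 0 < r) (hr1 : r < 1) (hL : 1 ≤ L)
    (hH3 : ∀ y ∈ C, ∀ m : ℕ, dTV ((μm (Measure.dirac y)).map (fun ω => ω m)) π ≤ L * r ^ m)
    (n : ℕ) (hn : 1 ≤ n) (c : Fin n → ℝ) (hc : ∀ i, 0 ≤ c i)
    (f : (Fin n → 𝓧) → ℝ) (hf : f ∈ BD 𝓧 n c) :
    ∀ (i : Fin n) (v : Fin n → 𝓧), v i ∈ C →
      |gfun μm f i v - gfunPi μm π f i v|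
        ≤ 2 * L * ∑ j : Fin n,
            if (i : ℕ) < (j : ℕ) then c j * r ^ ((j : ℕ) - (i : ℕ)) else 0 := by
  intro i v hvC
  obtain ⟨hfm, hfd⟩ := hf
  have hin : (i : ℕ) < n := i.isLt
  set Φ : (ℕ → 𝓧) → ℝ :=
    fun ω => f (fun k => if (k : ℕ) ≤ (i : ℕ) then v k else ω ((k : ℕ) - (i : ℕ))) with hΦdef
  have hΦm : Measurable Φ := by
    apply hfm.comp
    apply measurable_pi_lambda
    intro k
    by_cases h : (k : ℕ) ≤ (i : ℕ)
    · simpa [h] using (measurable_const : Measurable fun _ : ℕ → 𝓧 => v k)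
    · simpa [h] using measurable_pi_apply ((k : ℕ) - (i : ℕ))
  set B : ℝ := |f v| + ∑ j, c j with hBdef
  have hΦb : ∀ ω, |Φ ω| ≤ B := by
    intro ω
    have h1 : |Φ ω - f v| ≤
        ∑ j, if (fun k : Fin n => if (k : ℕ) ≤ (i : ℕ) then v k else ω ((k : ℕ) - (i : ℕ))) j
          = v j then (0:ℝ) else c j :=
      hfd _ v
    have h2 : ∑ j, (if (fun k : Fin n => if (k : ℕ) ≤ (i : ℕ) then v k
          else ω ((k : ℕ) - (i : ℕ))) j
        = v j then (0:ℝ) else c j) ≤ ∑ j, c j :=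
      Finset.sum_le_sum fun j _ => by split_ifs; exacts [hc j, le_refl _]
    have h3 := abs_sub_abs_le_abs_sub (Φ ω) (f v)
    rw [hBdef]
    linarith
  set d : ℕ → ℝ := fun m => if m = 0 then 0 else
    if h : (i : ℕ) + m < n then c ⟨(i : ℕ) + m, h⟩ else 0 with hddef
  have hd : ∀ m, 0 ≤ d m := by
    intro m; rw [hddef]; dsimp only; split_ifs
    exacts [le_refl _, hc _, le_refl _]
  have hΦd : ∀ ω ω', |Φ ω - Φ ω'| ≤
      ∑ m ∈ Finset.range (n - (i : ℕ)), if ω m = ω' m then 0 else d m := by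
    intro ω ω'
    refine (hfd _ _).trans ?_
    have step1 : ∑ j : Fin n,
        (if (fun k : Fin n => if (k : ℕ) ≤ (i : ℕ) then v k else ω ((k : ℕ) - (i : ℕ))) j =
            (fun k : Fin n => if (k : ℕ) ≤ (i : ℕ) then v k else ω' ((k : ℕ) - (i : ℕ))) j
          then (0:ℝ) else c j)
        ≤ ∑ j : Fin n, (if (i : ℕ) < (j : ℕ) then
            (if h : (j : ℕ) < n then
              (if ω ((j : ℕ) - (i : ℕ)) = ω' ((j : ℕ) - (i : ℕ)) then (0:ℝ) else c ⟨(j : ℕ), h⟩)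
            else 0) else 0) := by
      refine Finset.sum_le_sum fun j _ => ?_
      by_cases hj : (i : ℕ) < (j : ℕ)
      · rw [if_pos hj, dif_pos j.isLt]
        simp only [if_neg (not_le.2 hj), Fin.eta]
        exact le_refl _
      · rw [if_neg hj]
        have hle : (j : ℕ) ≤ (i : ℕ) := not_lt.1 hj
        simp only [if_pos hle, if_pos rfl]
        exact le_refl _
    refine step1.trans (le_of_eq ?_)
    rw [← sum_reindex n (i : ℕ) hin (fun jn => if h : jn < n then
      (if ω (jn - (i : ℕ)) = ω' (jn - (i : ℕ)) then (0:ℝ) else c ⟨jn, h⟩) else 0)]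
    refine Finset.sum_congr rfl fun m hm => ?_
    rcases Nat.eq_zero_or_pos m with h0 | h0
    · subst h0
      rw [if_pos rfl, hddef]
      simp
    · have hm' : (i : ℕ) + m < n := by
        have := Finset.mem_range.1 hm; omega
      have hmne : ¬ m = 0 := by omega
      have hsub : (i : ℕ) + m - (i : ℕ) = m := by omega
      rw [if_neg hmne, dif_pos hm', hsub, hddef]
      dsimp only
      by_cases hww : ω m = ω' m
      · rw [if_pos hww, if_pos hww]
      · rw [if_neg hww, if_neg hww, if_neg hmne, dif_pos hm']
  have hkey := keyB hμm (v i) (n - (i : ℕ)) d hd Φ hΦm B hΦb hΦd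
    (Measure.dirac (v i)) π inferInstance inferInstance
  have hgl : gfun μm f i v = ∫ ω, Φ ω ∂(μm (Measure.dirac (v i))) := rfl
  have hgr : gfunPi μm π f i v = ∫ ω, Φ ω ∂(μm π) := rfl
  rw [hgl, hgr]
  refine hkey.trans ?_
  set E2 : ℕ → ℝ := fun jn => if h : jn < n then
    c ⟨jn, h⟩ * (2 * (L * r ^ (jn - (i : ℕ)))) else 0 with hE2def
  have hterm : ∀ m ∈ Finset.range (n - (i : ℕ)),
      d m * (2 * dTV ((Measure.dirac (v i)).bind ⇑(kpow P m)) (π.bind ⇑(kpow P m)))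
      ≤ (if m = 0 then (0:ℝ) else E2 ((i : ℕ) + m)) := by
    intro m hm
    rcases Nat.eq_zero_or_pos m with h0 | h0
    · subst h0; simp [hddef]
    · have hmne : ¬ m = 0 := by omega
      rw [if_neg hmne]
      have hm' : (i : ℕ) + m < n := by
        have := Finset.mem_range.1 hm; omega
      have hdm : d m = c ⟨(i : ℕ) + m, hm'⟩ := by
        rw [hddef]; dsimp only; rw [if_neg hmne, dif_pos hm']
      have hdtv : dTV ((Measure.dirac (v i)).bind ⇑(kpow P m)) (π.bind ⇑(kpow P m))
          ≤ L * r ^ m := by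
        rw [pi_kpow hInv m, ← eval_law hμm m (Measure.dirac (v i)) inferInstance]
        exact hH3 (v i) hvC m
      have hE2 : E2 ((i : ℕ) + m) = c ⟨(i : ℕ) + m, hm'⟩ * (2 * (L * r ^ m)) := by
        rw [hE2def]; dsimp only; rw [dif_pos hm',
          show (i : ℕ) + m - (i : ℕ) = m from by omega]
      rw [hdm, hE2]
      apply mul_le_mul_of_nonneg_left _ (hc _)
      linarith
  refine (Finset.sum_le_sum hterm).trans (le_of_eq ?_)
  rw [sum_reindex n (i : ℕ) hin E2, Finset.mul_sum]
  refine Finset.sum_congr rfl fun j _ => ?_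
  by_cases hj : (i : ℕ) < (j : ℕ)
  · rw [if_pos hj, if_pos hj, hE2def]
    dsimp only
    rw [dif_pos j.isLt]
    simp only [Fin.eta]
    ring
  · rw [if_neg hj, if_neg hj]
    ring

end QMD

end
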